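/- arXiv:1212.2074 — 3 statements merged into one kernel-verified Lean document; each statement's English description precedes it below -/
import Mathlib

section
/- Let δ, κ > 0 and let β be the unique solution in (0, ∞) of tanh(√(2δ)·β) = δ(2κβ − δ)/(κ√(2δ)). Then tanh(√(2δ)·x) − δ(2κx − δ)/(κ√(2δ)) > 0 for all x ∈ [0, β), and tanh(√(2δ)·x) − δ(2κx − δ)/(κ√(2δ)) < 0 for all x ∈ (β, ∞). -/
/-!
Write `c = √(2δ)`. Since `c² = 2δ`, the line on the right is `c x - δ² / (κ c)`, so the function
is `(tanh (c x) - c x) + δ² / (κ c)`. As `tanh' = 1 - tanh²`, the map `y ↦ tanh y - y` has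
derivative `-tanh² y`, negative away from `0`; hence the function is strictly decreasing on all
of `ℝ` and changes sign exactly at its zero `β`.
-/

open Real

namespace Real

theorem hasDerivAt_tanh (x : ℝ) : HasDerivAt tanh (1 - tanh x ^ 2) x := by
  have h := (hasDerivAt_sinh x).div (hasDerivAt_cosh x) (cosh_pos x).ne'
  rw [show sinh / cosh = tanh from funext fun y => (tanh_eq_sinh_div_cosh y).symm] at h
  refine h.congr_deriv ?_
  rw [tanh_eq_sinh_div_cosh]
  field_simp

theorem tanh_ne_zero {x : ℝ} (hx : x ≠ 0) : tanh x ≠ 0 := by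
  rw [tanh_eq_sinh_div_cosh]
  exact div_ne_zero (sinh_ne_zero.mpr hx) (cosh_pos x).ne'

theorem strictAnti_tanh_sub_self : StrictAnti fun x => tanh x - x := by
  have hderiv (x : ℝ) : HasDerivAt (fun x => tanh x - x) (-tanh x ^ 2) x :=
    ((hasDerivAt_tanh x).sub (hasDerivAt_id x)).congr_deriv (by ring)
  have hcont : Continuous fun x => tanh x - x :=
    continuous_iff_continuousAt.mpr fun x => (hderiv x).continuousAt
  have hneg {D : Set ℝ} (hD : Convex ℝ D) (h0 : (0 : ℝ) ∉ interior D) :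
      StrictAntiOn (fun x => tanh x - x) D :=
    strictAntiOn_of_deriv_neg hD hcont.continuousOn fun x hx => by
      rw [(hderiv x).deriv, neg_lt_zero]
      exact pow_two_pos_of_ne_zero (tanh_ne_zero (ne_of_mem_of_not_mem hx h0))
  exact (hneg (convex_Iic 0) (by simp)).Iic_union_Ici (hneg (convex_Ici 0) (by simp))

end Real

theorem statement1_general (δ κ β : ℝ) (hδ : 0 < δ) (hκ : 0 < κ)
    (heq : Real.tanh (Real.sqrt (2*δ) * β) = δ * (2*κ*β - δ) / (κ * Real.sqrt (2*δ))) :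
    (∀ x : ℝ, 0 ≤ x → x < β →
      0 < Real.tanh (Real.sqrt (2*δ) * x) - δ * (2*κ*x - δ) / (κ * Real.sqrt (2*δ))) ∧
    (∀ x : ℝ, β < x →
      Real.tanh (Real.sqrt (2*δ) * x) - δ * (2*κ*x - δ) / (κ * Real.sqrt (2*δ)) < 0) := by
  set c := √(2 * δ)
  have hc : 0 < c := sqrt_pos.mpr (by positivity)
  have hline (x : ℝ) : δ * (2 * κ * x - δ) / (κ * c) = c * x - δ ^ 2 / (κ * c) := by
    have hc2 : c ^ 2 = 2 * δ := sq_sqrt (by positivity)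
    field_simp
    linear_combination -κ * x * hc2
  have hanti : StrictAnti fun x => tanh (c * x) - δ * (2 * κ * x - δ) / (κ * c) := by
    simp_rw [hline, ← sub_add]
    exact (strictAnti_tanh_sub_self.comp_strictMono (strictMono_mul_left_of_pos hc)).add_const _
  have hβ : tanh (c * β) - δ * (2 * κ * β - δ) / (κ * c) = 0 := sub_eq_zero.mpr heq
  exact ⟨fun x _ hx => hβ ▸ hanti hx, fun x hx => hβ ▸ hanti hx⟩

/-- Let `δ, κ > 0` and let `β` be the unique solution in `(0, ∞)` of
`tanh(√(2δ)·β) = δ(2κβ − δ)/(κ√(2δ))`. Then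
`tanh(√(2δ)·x) − δ(2κx − δ)/(κ√(2δ)) > 0` for all `x ∈ [0, β)`, and
`tanh(√(2δ)·x) − δ(2κx − δ)/(κ√(2δ)) < 0` for all `x ∈ (β, ∞)`. -/
theorem statement1 (δ κ β : ℝ) (hδ : 0 < δ) (hκ : 0 < κ) (hβ : 0 < β)
    (heq : Real.tanh (Real.sqrt (2*δ) * β) = δ * (2*κ*β - δ) / (κ * Real.sqrt (2*δ))) :
    (∀ x : ℝ, 0 ≤ x → x < β →
      0 < Real.tanh (Real.sqrt (2*δ) * x) - δ * (2*κ*x - δ) / (κ * Real.sqrt (2*δ))) ∧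
    (∀ x : ℝ, β < x →
      Real.tanh (Real.sqrt (2*δ) * x) - δ * (2*κ*x - δ) / (κ * Real.sqrt (2*δ)) < 0) :=
  statement1_general δ κ β hδ hκ heq
end

section
/- Let δ, κ, λ > 0 and μ ≥ 0 with δλ − κ > 0, and suppose √((κ + δμ)/(δ(δλ − κ))) < δ/(2κ). Then the equation tanh(√(2δ)·α) = δ(δ − 2κα) / (√(2δ)(δ(δλ − κ)α² − (κ + δμ))) has exactly one solution α in (0, ∞), and this unique solution satisfies √((κ + δμ)/(δ(δλ − κ))) < α < δ/(2κ). -/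
/-!
Write `r = √(B/A)` and `b = p/q`. On a positive solution of
`tanh (s α) = (p - q α) / (s (A α² - B))` the right-hand side is positive, so the numerator and
the denominator have the same sign, which forces `r < α < b`. On `[r, ∞)` the equation reads
`G α = p` with `G α = tanh (s α) · s (A α² - B) + q α`, a product of two nonnegative monotone
functions plus a strictly increasing one. Since `G r = q r < p < G b`, the intermediate value
theorem gives a root in `(r, b)`, and strict monotonicity makes it unique.
-/

open Set

namespace Real

theorem tanh_strictMono : StrictMono tanh := fun x y hxy => by
  have hmem (z : ℝ) : tanh z ∈ Ioo (-1) 1 := ⟨neg_one_lt_tanh z, tanh_lt_one z⟩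
  rwa [← artanh_lt_artanh_iff (hmem x) (hmem y), artanh_tanh, artanh_tanh]

theorem tanh_pos {x : ℝ} (hx : 0 < x) : 0 < tanh x :=
  tanh_zero ▸ tanh_strictMono hx

@[fun_prop]
theorem continuous_tanh : Continuous tanh := by
  simp only [funext tanh_eq_sinh_div_cosh]
  exact continuous_sinh.div continuous_cosh fun x => (cosh_pos x).ne'

end Real

open Real

section TanhEquation

variable {s A B p q : ℝ}

theorem sqrt_div_lt_iff_lt_mul_sq (hA : 0 < A) {α : ℝ} (hα : 0 < α) :
    √(B / A) < α ↔ B < A * α ^ 2 := by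
  rw [sqrt_lt' hα, div_lt_iff₀' hA]

theorem sqrt_div_le_iff_le_mul_sq (hA : 0 < A) {α : ℝ} (hα : 0 ≤ α) :
    √(B / A) ≤ α ↔ B ≤ A * α ^ 2 := by
  rw [sqrt_le_left hα, div_le_iff₀' hA]

theorem mem_Ioo_of_tanh_mul_eq_div (hs : 0 < s) (hA : 0 < A) (hq : 0 < q)
    (hrb : √(B / A) ≤ p / q) {α : ℝ} (hα : 0 < α)
    (heq : tanh (s * α) = (p - q * α) / (s * (A * α ^ 2 - B))) :
    α ∈ Ioo (√(B / A)) (p / q) := by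
  have hpos : 0 < (p - q * α) / (s * (A * α ^ 2 - B)) := heq ▸ tanh_pos (mul_pos hs hα)
  rcases div_pos_iff.1 hpos with ⟨hnum, hden⟩ | ⟨hnum, hden⟩
  · have hden' : B < A * α ^ 2 := by nlinarith
    exact ⟨(sqrt_div_lt_iff_lt_mul_sq hA hα).2 hden', by rw [lt_div_iff₀ hq]; linarith⟩
  · have hden' : A * α ^ 2 < B := by nlinarith
    have hbα : p / q < α := by rw [div_lt_iff₀ hq]; linarith
    exact absurd ((sqrt_div_le_iff_le_mul_sq hA hα.le).1 (hrb.trans hbα.le)) (not_le.2 hden')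

theorem strictMonoOn_tanh_mul_add (hs : 0 ≤ s) (hA : 0 < A) (hq : 0 < q) :
    StrictMonoOn (fun α => tanh (s * α) * (s * (A * α ^ 2 - B)) + q * α) (Ici √(B / A)) := by
  have hα₀ : ∀ α ∈ Ici √(B / A), 0 ≤ α := fun α hα => (sqrt_nonneg _).trans hα
  refine MonotoneOn.add_strictMono ?_ ((strictMono_mul_left_of_pos hq).strictMonoOn _)
  refine MonotoneOn.mul (f := fun α => tanh (s * α)) (g := fun α => s * (A * α ^ 2 - B))
    ?_ ?_ ?_ ?_
  · exact fun x _ y _ hxy => tanh_strictMono.monotone (mul_le_mul_of_nonneg_left hxy hs)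
  · intro x hx y _ hxy
    have : x ^ 2 ≤ y ^ 2 := pow_le_pow_left₀ (hα₀ x hx) hxy 2
    exact mul_le_mul_of_nonneg_left (by nlinarith) hs
  · intro α hα
    rw [← tanh_zero]
    exact tanh_strictMono.monotone (mul_nonneg hs (hα₀ α hα))
  · exact fun α hα =>
      mul_nonneg hs (sub_nonneg.2 ((sqrt_div_le_iff_le_mul_sq hA (hα₀ α hα)).1 hα))

theorem tanh_mul_eq_div_iff (hs : 0 < s) (hA : 0 < A) {α : ℝ} (hα : √(B / A) < α) :
    tanh (s * α) = (p - q * α) / (s * (A * α ^ 2 - B)) ↔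
      tanh (s * α) * (s * (A * α ^ 2 - B)) + q * α = p := by
  have hden : 0 < A * α ^ 2 - B :=
    sub_pos.2 ((sqrt_div_lt_iff_lt_mul_sq hA ((sqrt_nonneg _).trans_lt hα)).1 hα)
  rw [eq_div_iff (mul_pos hs hden).ne', ← eq_sub_iff_add_eq]

theorem exists_tanh_mul_add_eq (hs : 0 < s) (hA : 0 < A) (hB : 0 ≤ B) (hq : 0 < q)
    (hrb : √(B / A) < p / q) :
    ∃ α ∈ Ioo (√(B / A)) (p / q), tanh (s * α) * (s * (A * α ^ 2 - B)) + q * α = p := by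
  set G : ℝ → ℝ := fun α => tanh (s * α) * (s * (A * α ^ 2 - B)) + q * α
  have hG : Continuous G := by fun_prop
  have hGr : G √(B / A) < p := by
    have hAr : A * √(B / A) ^ 2 = B := by
      rw [sq_sqrt (div_nonneg hB hA.le)]
      field_simp
    simp only [G, hAr, sub_self, mul_zero, zero_add]
    rwa [← lt_div_iff₀' hq]
  have hGb : p < G (p / q) := by
    have hb : 0 < p / q := (sqrt_nonneg _).trans_lt hrb
    have hden : 0 < A * (p / q) ^ 2 - B := sub_pos.2 ((sqrt_div_lt_iff_lt_mul_sq hA hb).1 hrb)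
    have : 0 < tanh (s * (p / q)) * (s * (A * (p / q) ^ 2 - B)) :=
      mul_pos (tanh_pos (mul_pos hs hb)) (mul_pos hs hden)
    simp only [G, mul_div_cancel₀ p hq.ne']
    linarith
  exact intermediate_value_Ioo hrb.le hG.continuousOn ⟨hGr, hGb⟩

theorem existsUnique_tanh_mul_eq_div (hs : 0 < s) (hA : 0 < A) (hB : 0 ≤ B) (hq : 0 < q)
    (hrb : √(B / A) < p / q) :
    ∃! α : ℝ, 0 < α ∧ tanh (s * α) = (p - q * α) / (s * (A * α ^ 2 - B)) := by
  obtain ⟨α, hα, hGα⟩ := exists_tanh_mul_add_eq hs hA hB hq hrb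
  have hα₀ : 0 < α := (sqrt_nonneg _).trans_lt hα.1
  refine ⟨α, ⟨hα₀, (tanh_mul_eq_div_iff hs hA hα.1).2 hGα⟩, fun β ⟨hβ₀, hβ⟩ => ?_⟩
  have hβr := (mem_Ioo_of_tanh_mul_eq_div hs hA hq hrb.le hβ₀ hβ).1
  exact (strictMonoOn_tanh_mul_add hs.le hA hq).injOn hβr.le hα.1.le
    (((tanh_mul_eq_div_iff hs hA hβr).1 hβ).trans hGα.symm)

end TanhEquation

theorem statement11_general (δ κ lam μ : ℝ) (hδ : 0 < δ) (hκ : 0 < κ)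
    (hμ : 0 ≤ μ) (h : 0 < δ*lam - κ)
    (hord : Real.sqrt ((κ + δ*μ)/(δ*(δ*lam - κ))) < δ/(2*κ)) :
    (∃! α : ℝ, 0 < α ∧
      Real.tanh (Real.sqrt (2*δ) * α) =
        δ*(δ - 2*κ*α) / (Real.sqrt (2*δ) * (δ*(δ*lam - κ)*α^2 - (κ + δ*μ)))) ∧
    (∀ α : ℝ, 0 < α →
      Real.tanh (Real.sqrt (2*δ) * α) =
        δ*(δ - 2*κ*α) / (Real.sqrt (2*δ) * (δ*(δ*lam - κ)*α^2 - (κ + δ*μ))) →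
      Real.sqrt ((κ + δ*μ)/(δ*(δ*lam - κ))) < α ∧ α < δ/(2*κ)) := by
  have hb : δ ^ 2 / (2 * δ * κ) = δ / (2 * κ) := by field_simp
  have hnum (α : ℝ) : δ * (δ - 2 * κ * α) = δ ^ 2 - 2 * δ * κ * α := by ring
  have hs : 0 < √(2 * δ) := sqrt_pos.2 (by positivity)
  have hA : 0 < δ * (δ * lam - κ) := mul_pos hδ h
  have hq : 0 < 2 * δ * κ := by positivity
  simp only [hnum, ← hb] at hord ⊢
  exact ⟨existsUnique_tanh_mul_eq_div hs hA (by positivity) hq hord,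
    fun α hα heq => mem_Ioo_of_tanh_mul_eq_div hs hA hq hord.le hα heq⟩

/-- Let `δ, κ, λ > 0`, `μ ≥ 0` with `δλ − κ > 0`, and suppose
`√((κ + δμ)/(δ(δλ − κ))) < δ/(2κ)`. Then the equation
`tanh(√(2δ)·α) = δ(δ − 2κα)/(√(2δ)(δ(δλ − κ)α² − (κ + δμ)))` has exactly one solution
`α ∈ (0, ∞)`, and it satisfies `√((κ + δμ)/(δ(δλ − κ))) < α < δ/(2κ)`. -/
theorem statement11 (δ κ lam μ : ℝ) (hδ : 0 < δ) (hκ : 0 < κ) (hlam : 0 < lam)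
    (hμ : 0 ≤ μ) (h : 0 < δ*lam - κ)
    (hord : Real.sqrt ((κ + δ*μ)/(δ*(δ*lam - κ))) < δ/(2*κ)) :
    (∃! α : ℝ, 0 < α ∧
      Real.tanh (Real.sqrt (2*δ) * α) =
        δ*(δ - 2*κ*α) / (Real.sqrt (2*δ) * (δ*(δ*lam - κ)*α^2 - (κ + δ*μ)))) ∧
    (∀ α : ℝ, 0 < α →
      Real.tanh (Real.sqrt (2*δ) * α) =
        δ*(δ - 2*κ*α) / (Real.sqrt (2*δ) * (δ*(δ*lam - κ)*α^2 - (κ + δ*μ))) →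
      Real.sqrt ((κ + δ*μ)/(δ*(δ*lam - κ))) < α ∧ α < δ/(2*κ)) :=
  statement11_general δ κ lam μ hδ hκ hμ h hord
end

section
/- Let δ, λ > 0 and set α = −1/√(2δ) + √(1/(2δ) + 1). Then α is the unique solution in (0, ∞) of the equation √(2δ)(1 − x²) = 2x, and α ∈ (0, 1). Moreover, the function u : ℝ → ℝ defined by u(x) = −λx² + λ for |x| ≤ α and u(x) = λ(1 − α²)·exp(−√(2δ)(|x| − α)) for |x| > α is continuously differentiable on ℝ, and u'(x) ≥ −1 for all x ≥ 0 if and only if 2λα ≤ 1. -/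
/-!
With `s = √(2δ)`, `u(x) = φ(|x|)` where the radial profile `φ` glues the parabola `λ(1 - r²)`
to the exponential `λ(1 - α²)e^{-s(r - α)}` at `α`. Values match automatically; the slopes
`-2λα` and `-sλ(1 - α²)` match exactly when `s(1 - α²) = 2α`, whose positive root is `α`, and
`φ'(0) = 0` makes the even extension `C¹` at `0` as well. Since `φ'` decreases on `(-∞, α]` and
`φ'(r) = -2λα e^{-s(r - α)}` beyond, its minimum is `φ'(α) = -2λα`.
-/

open Set Real

section Gluing

variable {E : Type*} [NormedAddCommGroup E] [NormedSpace ℝ E]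

theorem hasDerivAt_ite_le {f g f' g' : ℝ → E} {a : ℝ}
    (hf : ∀ x, HasDerivAt f (f' x) x) (hg : ∀ x, HasDerivAt g (g' x) x)
    (hfg : f a = g a) (hfg' : f' a = g' a) (x : ℝ) :
    HasDerivAt (fun x => if x ≤ a then f x else g x) (if x ≤ a then f' x else g' x) x := by
  rcases lt_trichotomy x a with hxa | hxa | hxa
  · rw [if_pos hxa.le]
    exact (hf x).congr_of_eventuallyEq ((eventually_lt_nhds hxa).mono fun y hy => if_pos hy.le)
  · subst x
    rw [if_pos le_rfl]
    have hleft : HasDerivWithinAt (fun x => if x ≤ a then f x else g x) (f' a) (Iic a) a :=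
      (hf a).hasDerivWithinAt.congr_of_mem (fun y hy => if_pos hy) self_mem_Iic
    have hright : HasDerivWithinAt (fun x => if x ≤ a then f x else g x) (f' a) (Ici a) a := by
      refine hfg' ▸ (hg a).hasDerivWithinAt.congr_of_mem (fun y hy => ?_) self_mem_Ici
      rcases (mem_Ici.1 hy).eq_or_lt with rfl | hay
      · exact if_pos le_rfl |>.trans hfg
      · exact if_neg (not_le.2 hay)
    simpa only [Iic_union_Ici, hasDerivWithinAt_univ] using hleft.union hright
  · rw [if_neg (not_le.2 hxa)]
    exact (hg x).congr_of_eventuallyEq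
      ((eventually_gt_nhds hxa).mono fun y hy => if_neg (not_le.2 hy))

theorem hasDerivAt_comp_abs {φ φ' : ℝ → E} (hφ : ∀ r, HasDerivAt φ (φ' r) r) (h0 : φ' 0 = 0)
    (x : ℝ) : HasDerivAt (fun x => φ |x|) (if x ≤ 0 then -φ' (-x) else φ' x) x := by
  have hglue : (fun x => φ |x|) = fun x => if x ≤ 0 then φ (-x) else φ x := by
    ext x
    split_ifs with hx
    · rw [abs_of_nonpos hx]
    · rw [abs_of_pos (not_le.1 hx)]
  rw [hglue]
  have hφneg (x : ℝ) : HasDerivAt (fun x => φ (-x)) (-φ' (-x)) x := by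
    simpa [Function.comp_def] using (hφ (-x)).scomp x (hasDerivAt_neg x)
  exact hasDerivAt_ite_le hφneg hφ (by rw [neg_zero]) (by rw [neg_zero, h0, neg_zero]) x

theorem contDiff_one_of_hasDerivAt {f f' : ℝ → E} (hf : ∀ x, HasDerivAt f (f' x) x)
    (hf' : Continuous f') : ContDiff ℝ 1 f :=
  contDiff_one_iff_deriv.2 ⟨fun x => (hf x).differentiableAt,
    (funext fun x => (hf x).deriv) ▸ hf'⟩

theorem contDiff_one_comp_abs {φ φ' : ℝ → E} (hφ : ∀ r, HasDerivAt φ (φ' r) r)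
    (hφ' : Continuous φ') (h0 : φ' 0 = 0) : ContDiff ℝ 1 (fun x => φ |x|) := by
  refine contDiff_one_of_hasDerivAt (hasDerivAt_comp_abs hφ h0) ?_
  refine Continuous.if_le (by fun_prop) hφ' continuous_id continuous_const ?_
  rintro x rfl
  rw [neg_zero, h0, neg_zero]

end Gluing

noncomputable def fitPoint (s : ℝ) : ℝ := -1/s + √(1/s^2 + 1)

theorem fitPoint_pos {s : ℝ} (hs : 0 < s) : 0 < fitPoint s := by
  have : 1/s < √(1/s^2 + 1) := (lt_sqrt (by positivity)).2 (by rw [div_pow, one_pow]; linarith)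
  rw [fitPoint, neg_div]; linarith

theorem mul_one_sub_fitPoint_sq {s : ℝ} (hs : 0 < s) :
    s * (1 - fitPoint s ^ 2) = 2 * fitPoint s := by
  have ht : √(1/s^2 + 1) ^ 2 = 1/s^2 + 1 := sq_sqrt (by positivity)
  rw [fitPoint]
  generalize √(1/s^2 + 1) = t at ht ⊢
  field_simp at ht ⊢
  linear_combination (-1) * ht

theorem lt_one_of_mul_one_sub_sq {s x : ℝ} (hs : 0 ≤ s) (hx : 0 < x) (h : s * (1 - x^2) = 2 * x) :
    x < 1 := by
  by_contra! h1
  nlinarith [mul_nonneg hs (by nlinarith : 0 ≤ x^2 - 1)]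

theorem eq_of_mul_one_sub_sq {s x y : ℝ} (hs : 0 ≤ s) (hx : 0 < x) (hy : 0 < y)
    (hx' : s * (1 - x^2) = 2 * x) (hy' : s * (1 - y^2) = 2 * y) : x = y := by
  have : (x - y) * (s * (x + y) + 2) = 0 := by linear_combination hy' - hx'
  have : 0 < s * (x + y) + 2 := by positivity
  nlinarith

noncomputable def radialValue (lam α s r : ℝ) : ℝ :=
  if r ≤ α then -lam * r^2 + lam else lam * (1 - α^2) * exp (-s * (r - α))

noncomputable def radialValueDeriv (lam α s r : ℝ) : ℝ :=
  if r ≤ α then -(2 * lam * r) else -(s * lam * (1 - α^2)) * exp (-s * (r - α))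

section RadialValue

variable {lam α s : ℝ}

theorem hasDerivAt_radialValue (hfit : s * (1 - α^2) = 2 * α) (r : ℝ) :
    HasDerivAt (radialValue lam α s) (radialValueDeriv lam α s r) r := by
  have hquad (r : ℝ) : HasDerivAt (fun r => -lam * r^2 + lam) (-(2 * lam * r)) r :=
    (((hasDerivAt_pow 2 r).const_mul (-lam)).add_const lam).congr_deriv (by ring)
  have hexp (r : ℝ) : HasDerivAt (fun r => lam * (1 - α^2) * exp (-s * (r - α)))
      (-(s * lam * (1 - α^2)) * exp (-s * (r - α))) r := by
    have hlin : HasDerivAt (fun r => -s * (r - α)) (-s) r := by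
      simpa using ((hasDerivAt_id r).sub_const α).const_mul (-s)
    exact (hlin.exp.const_mul _).congr_deriv (by ring)
  refine hasDerivAt_ite_le hquad hexp (by simp; ring) ?_ r
  simp only [sub_self, mul_zero, exp_zero, mul_one]
  linear_combination lam * hfit

theorem continuous_radialValueDeriv (hfit : s * (1 - α^2) = 2 * α) :
    Continuous (radialValueDeriv lam α s) := by
  refine Continuous.if_le (by fun_prop) (by fun_prop) continuous_id continuous_const ?_
  rintro r rfl
  simp only [sub_self, mul_zero, exp_zero, mul_one]
  linear_combination lam * hfit

theorem radialValueDeriv_zero (hα : 0 ≤ α) : radialValueDeriv lam α s 0 = 0 := by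
  simp [radialValueDeriv, hα]

theorem radialValueDeriv_self : radialValueDeriv lam α s α = -(2 * lam * α) :=
  if_pos le_rfl

theorem radialValueDeriv_self_le (hfit : s * (1 - α^2) = 2 * α) (hlam : 0 ≤ lam)
    (hα : 0 ≤ α) (hs : 0 ≤ s) (r : ℝ) :
    radialValueDeriv lam α s α ≤ radialValueDeriv lam α s r := by
  rw [radialValueDeriv_self, radialValueDeriv]
  split_ifs with hr
  · nlinarith
  · have hdecay : exp (-s * (r - α)) ≤ 1 := exp_le_one_iff.2 (by nlinarith)
    have hslope : s * lam * (1 - α^2) = 2 * lam * α := by linear_combination lam * hfit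
    rw [hslope]
    nlinarith [mul_nonneg hlam hα]

end RadialValue

/-- Let `δ, λ > 0` and `α = −1/√(2δ) + √(1/(2δ) + 1)`. Then `α` is the unique positive
solution of `√(2δ)(1 − x²) = 2x` and lies in `(0, 1)`. Moreover, `u` defined by
`u(x) = −λx² + λ` for `|x| ≤ α` and `u(x) = λ(1 − α²)e^{−√(2δ)(|x| − α)}` for `|x| > α`
is `C¹` on `ℝ`, and `u'(x) ≥ −1` for all `x ≥ 0` iff `2λα ≤ 1`. -/
theorem statement15 (δ lam α : ℝ) (hδ : 0 < δ) (hlam : 0 < lam)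
    (hα : α = -1/Real.sqrt (2*δ) + Real.sqrt (1/(2*δ) + 1))
    (u : ℝ → ℝ)
    (hu : ∀ x : ℝ, u x =
      if |x| ≤ α then -lam*x^2 + lam
      else lam*(1 - α^2) * Real.exp (-(Real.sqrt (2*δ)) * (|x| - α))) :
    (0 < α ∧ α < 1) ∧
    (Real.sqrt (2*δ) * (1 - α^2) = 2*α ∧
      (∀ x : ℝ, 0 < x → Real.sqrt (2*δ) * (1 - x^2) = 2*x → x = α)) ∧
    ContDiff ℝ 1 u ∧
    ((∀ x : ℝ, 0 ≤ x → -1 ≤ deriv u x) ↔ 2*lam*α ≤ 1) := by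
  set s := √(2*δ)
  have hs : 0 < s := sqrt_pos.2 (by positivity)
  have hαs : α = fitPoint s := by rw [hα, fitPoint, sq_sqrt (by positivity)]
  have hα0 : 0 < α := hαs ▸ fitPoint_pos hs
  have hfit : s * (1 - α^2) = 2 * α := hαs ▸ mul_one_sub_fitPoint_sq hs
  have hu_eq : u = fun x => radialValue lam α s |x| := by
    ext x
    rw [hu, radialValue, sq_abs]
  have hderiv := hasDerivAt_comp_abs (hasDerivAt_radialValue (lam := lam) hfit)
    (radialValueDeriv_zero hα0.le)
  have hderiv_nonneg (x : ℝ) (hx : 0 ≤ x) : deriv u x = radialValueDeriv lam α s x := by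
    rw [hu_eq, (hderiv x).deriv]
    rcases hx.eq_or_lt with rfl | hx
    · simp [radialValueDeriv_zero hα0.le]
    · exact if_neg hx.not_ge
  refine ⟨⟨hα0, lt_one_of_mul_one_sub_sq hs.le hα0 hfit⟩,
    ⟨hfit, fun x hx hx' => eq_of_mul_one_sub_sq hs.le hx hα0 hx' hfit⟩,
    hu_eq ▸ contDiff_one_comp_abs (hasDerivAt_radialValue hfit)
      (continuous_radialValueDeriv hfit) (radialValueDeriv_zero hα0.le), ⟨fun h => ?_, fun h x hx => ?_⟩⟩
  · have := h α hα0.le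
    rw [hderiv_nonneg α hα0.le, radialValueDeriv_self] at this
    linarith
  · rw [hderiv_nonneg x hx]
    linarith [radialValueDeriv_self_le hfit hlam.le hα0.le hs.le x,
      radialValueDeriv_self (lam := lam) (α := α) (s := s)]
end
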